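/- arXiv:2309.08224 — 2 statements merged into one kernel-verified Lean document; each statement's English description precedes it below -/
import Mathlib

section
/- Let H : ℝ → ℝ be continuous and coercive and F0 : ℝ → ℝ be continuous, non-increasing and semi-coercive, and let p ∈ ℝ. If (R̲F0)(p) > H(p), then there exists ε > 0 such that R̲F0 is constant on the interval [p − ε, p + ε). If (R̄F0)(p) < H(p), then there exists ε > 0 such that R̄F0 is constant on the interval (p − ε, p + ε]. -/
/-! By continuity, `H`, and hence `min F0 H`, stays below a level `c < R̲F0 p` on a neighbourhood
of `p`; values below `c` cannot contribute to a supremum exceeding `c`, so moving the left end of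
`[x, ∞)` inside that neighbourhood does not change `sup_{[x, ∞)} min F0 H`. The
statement for `R̄F0` is the mirror image under `p ↦ -p`, `H ↦ -H(-·)`, `F0 ↦ -F0(-·)`. -/

open Set Filter

attribute [local instance] Classical.propDecidable

noncomputable section

/-- `H` is coercive: `H p → +∞` as `|p| → +∞`. -/
def Coercive (H : ℝ → ℝ) : Prop := Tendsto H (cocompact ℝ) atTop

/-- `F` is semi-coercive: `F p → +∞` as `p → -∞`. -/
def SemiCoercive (F : ℝ → ℝ) : Prop := Tendsto F atBot atTop

/-- Sub-relaxation: `(R̲F)(p) = sup_{q ≥ p} min (F q) (H q)`. -/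
def subR (H F : ℝ → ℝ) (p : ℝ) : ℝ := sSup ((fun q => min (F q) (H q)) '' Ici p)

/-- Super-relaxation: `(R̄F)(p) = inf_{q ≤ p} max (F q) (H q)`. -/
def supR (H F : ℝ → ℝ) (p : ℝ) : ℝ := sInf ((fun q => max (F q) (H q)) '' Iic p)

/-- Relaxation operator: `R̲F` where `F ≥ H`, `R̄F` where `F ≤ H`. -/
def relax (H F : ℝ → ℝ) (p : ℝ) : ℝ := if H p ≤ F p then subR H F p else supR H F p

/-- `p` is a negative characteristic point of `F` relative to `H`. -/
def negChar (H F : ℝ → ℝ) (p : ℝ) : Prop :=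
  H p = F p ∧ ∃ ε > 0, ∀ q ∈ Ioo (p - ε) p, H q < H p

/-- `p` is a positive characteristic point of `F` relative to `H`. -/
def posChar (H F : ℝ → ℝ) (p : ℝ) : Prop :=
  H p = F p ∧ ∃ ε > 0, ∀ q ∈ Ioo p (p + ε), H p < H q

/-- The upper point `p⁺ ∈ ℝ ∪ {+∞}` associated with `p` and `H`. -/
def upperPt (H : ℝ → ℝ) (p : ℝ) : EReal :=
  if ∀ ε > 0, ∃ q, p < q ∧ q < p + ε ∧ H q ≤ H p then (p : EReal)
  else sSup ((fun q : ℝ => (q : EReal)) '' {q : ℝ | p < q ∧ ∀ r ∈ Ioo p q, H p < H r})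

/-- The lower point `p⁻` associated with `p` and `H`. -/
def lowerPt (H : ℝ → ℝ) (p : ℝ) : ℝ :=
  if ∀ ε > 0, ∃ q, p - ε < q ∧ q < p ∧ H p ≤ H q then p
  else sInf {q : ℝ | q < p ∧ ∀ r ∈ Ioo q p, H r < H p}

/-- `p` is a positive limiter point of `F`. -/
def posLimiter (H F : ℝ → ℝ) (p : ℝ) : Prop :=
  (p : EReal) < upperPt H p ∧ F p ≤ H p ∧
    ∀ q : ℝ, H q < H p → F q ≤ H q →
      {r : ℝ | lowerPt H q < r ∧ (r : EReal) < upperPt H q} ∩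
        {r : ℝ | p < r ∧ (r : EReal) < upperPt H p} = ∅

/-- `p` is a negative limiter point of `F`. -/
def negLimiter (H F : ℝ → ℝ) (p : ℝ) : Prop :=
  lowerPt H p < p ∧ H p ≤ F p ∧
    ∀ q : ℝ, H q ≤ F q → H p < H q →
      {r : ℝ | lowerPt H q < r ∧ (r : EReal) < upperPt H q} ∩ Ioo (lowerPt H p) p = ∅

/-- The Godunov flux associated with `H`. -/
def godunov (H : ℝ → ℝ) (q p : ℝ) : ℝ :=
  if p ≤ q then sSup (H '' Icc p q) else sInf (H '' Icc q p)

/-- The lower (set-valued) Godunov semi-flux `G̲(q,p)`, as a subset of the extended reals. -/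
def subG (H : ℝ → ℝ) (q p : ℝ) : Set EReal :=
  if q < p then {⊥}
  else if q = p then Iic ((H p : ℝ) : EReal)
  else {((godunov H q p : ℝ) : EReal)}

/-- The upper (set-valued) Godunov semi-flux `Ḡ(q,p)`, as a subset of the extended reals. -/
def supG (H : ℝ → ℝ) (q p : ℝ) : Set EReal :=
  if q < p then {((godunov H q p : ℝ) : EReal)}
  else if q = p then Ici ((H p : ℝ) : EReal)
  else {⊤}

theorem csSup_image_Ici_eq_of_le_of_lt {α β : Type*} [LinearOrder α]
    [ConditionallyCompleteLinearOrder β] {f : α → β} {x y : α} {c : β}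
    (hbdd : BddAbove (f '' Ici x)) (hxy : x ≤ y) (hf : ∀ q ∈ Icc x y, f q ≤ c)
    (hc : c < sSup (f '' Ici x)) : sSup (f '' Ici x) = sSup (f '' Ici y) := by
  have hsub : f '' Ici y ⊆ f '' Ici x := image_mono (Ici_subset_Ici.2 hxy)
  have hle_max : sSup (f '' Ici x) ≤ max c (sSup (f '' Ici y)) := by
    refine csSup_le (nonempty_Ici.image f) ?_
    rintro _ ⟨q, hxq, rfl⟩
    rcases le_total q y with hqy | hyq
    · exact le_max_of_le_left (hf q ⟨hxq, hqy⟩)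
    · exact le_max_of_le_right (le_csSup (hbdd.mono hsub) (mem_image_of_mem f hyq))
  refine le_antisymm ?_ (csSup_le_csSup hbdd (nonempty_Ici.image f) hsub)
  exact (le_max_iff.1 hle_max).resolve_left hc.not_ge

section Relaxation

variable {H F : ℝ → ℝ}

theorem bddAbove_image_min_Ici (hF : Antitone F) (p : ℝ) :
    BddAbove ((fun q => min (F q) (H q)) '' Ici p) := by
  refine ⟨F p, ?_⟩
  rintro _ ⟨q, hpq, rfl⟩
  exact (min_le_left _ _).trans (hF hpq)

theorem subR_antitone (hF : Antitone F) : Antitone (subR H F) := fun _ _ hxy =>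
  csSup_le_csSup (bddAbove_image_min_Ici hF _) (nonempty_Ici.image _)
    (image_mono (Ici_subset_Ici.2 hxy))

theorem subR_eq_of_lt (hH : Continuous H) (hF : Antitone F) {p : ℝ} (hp : H p < subR H F p) :
    ∃ ε > 0, ∀ x ∈ Icc (p - ε) (p + ε), subR H F x = subR H F p := by
  obtain ⟨c, hpc, hcR⟩ := exists_between hp
  obtain ⟨ε, hε, hball⟩ := Metric.nhds_basis_closedBall.eventually_iff.1
    (hH.continuousAt.eventually (eventually_lt_nhds hpc))
  rw [Real.closedBall_eq_Icc] at hball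
  have hsmall : ∀ q ∈ Icc (p - ε) (p + ε), min (F q) (H q) ≤ c := fun q hq =>
    (min_le_right _ _).trans (hball hq).le
  refine ⟨ε, hε, fun x hx => ?_⟩
  rcases le_total x p with hxp | hpx
  · exact csSup_image_Ici_eq_of_le_of_lt (bddAbove_image_min_Ici hF x) hxp
      (fun q hq => hsmall q ⟨hx.1.trans hq.1, hq.2.trans (by linarith)⟩)
      (hcR.trans_le (subR_antitone hF hxp))
  · exact (csSup_image_Ici_eq_of_le_of_lt (bddAbove_image_min_Ici hF p) hpx
      (fun q hq => hsmall q ⟨by linarith [hq.1], hq.2.trans hx.2⟩) hcR).symm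

theorem supR_eq_neg_subR (H F : ℝ → ℝ) (p : ℝ) :
    supR H F p = -subR (fun s => -H (-s)) (fun s => -F (-s)) (-p) := by
  rw [supR, subR, Real.sInf_def, neg_inj, ← image_neg_Iic, image_image]
  congr 1
  ext y
  simp only [Set.mem_neg, mem_image, mem_Iic, neg_neg]
  refine exists_congr fun q => and_congr_right fun _ => ?_
  simp only [min_neg_neg, neg_eq_iff_eq_neg]

theorem supR_eq_of_lt (hH : Continuous H) (hF : Antitone F) {p : ℝ} (hp : supR H F p < H p) :
    ∃ ε > 0, ∀ x ∈ Icc (p - ε) (p + ε), supR H F x = supR H F p := by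
  have hp' : -H (- -p) < subR (fun s => -H (-s)) (fun s => -F (-s)) (-p) := by
    rw [supR_eq_neg_subR] at hp
    rw [neg_neg]
    linarith
  obtain ⟨ε, hε, hconst⟩ := subR_eq_of_lt (show Continuous fun s => -H (-s) by fun_prop)
    (fun _ _ h => neg_le_neg (hF (neg_le_neg h))) hp'
  refine ⟨ε, hε, fun x hx => ?_⟩
  rw [supR_eq_neg_subR, supR_eq_neg_subR, hconst (-x) ⟨by linarith [hx.2], by linarith [hx.1]⟩]

end Relaxation

theorem local_properties_of_semi_relaxations_general (H F0 : ℝ → ℝ)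
    (hH : Continuous H)
    (hFa : Antitone F0) (p : ℝ) :
    (H p < subR H F0 p →
      ∃ ε > 0, ∀ x ∈ Ico (p - ε) (p + ε), subR H F0 x = subR H F0 p) ∧
    (supR H F0 p < H p →
      ∃ ε > 0, ∀ x ∈ Ioc (p - ε) (p + ε), supR H F0 x = supR H F0 p) := by
  constructor
  · intro hp
    obtain ⟨ε, hε, hconst⟩ := subR_eq_of_lt hH hFa hp
    exact ⟨ε, hε, fun x hx => hconst x (Ico_subset_Icc_self hx)⟩
  · intro hp
    obtain ⟨ε, hε, hconst⟩ := supR_eq_of_lt hH hFa hp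
    exact ⟨ε, hε, fun x hx => hconst x (Ioc_subset_Icc_self hx)⟩

/-- Local properties of `R̲F0` and `R̄F0`. -/
theorem local_properties_of_semi_relaxations (H F0 : ℝ → ℝ)
    (hH : Continuous H) (hHc : Coercive H)
    (hF : Continuous F0) (hFa : Antitone F0) (hFs : SemiCoercive F0) (p : ℝ) :
    (H p < subR H F0 p →
      ∃ ε > 0, ∀ x ∈ Ico (p - ε) (p + ε), subR H F0 x = subR H F0 p) ∧
    (supR H F0 p < H p →
      ∃ ε > 0, ∀ x ∈ Ioc (p - ε) (p + ε), supR H F0 x = supR H F0 p) :=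
  local_properties_of_semi_relaxations_general H F0 hH hFa p
end
end

section
/- Let H : ℝ → ℝ be continuous and coercive and F0 : ℝ → ℝ be continuous, non-increasing and semi-coercive. If p ∈ ℝ satisfies (ℜF0)(p) ≠ H(p), then ℜF0 is constant on some open neighbourhood of p. -/
open Set Filter

attribute [local instance] Classical.propDecidable

noncomputable section

/-!
If `ℜF0 p ≠ H p`, then `p` lies strictly inside one of the two regimes, say
`H p < R̲F0 p ≤ F0 p` (the bound by `F0 p` because `F0` is non-increasing). Near `p` the
function `min F0 H` then stays below a level `c < R̲F0 p`, so for every nearby `x` the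
supremum over `q ≥ x` is decided by the values beyond that neighbourhood and equals
`R̲F0 p`. Since also `H < F0` persists near `p`, there `ℜF0 = R̲F0`. The super-relaxation
case is the order dual.
-/

open Topology

section

variable {α β : Type*} [LinearOrder α] [ConditionallyCompleteLinearOrder β]
  {g : α → β} {c : β}

theorem image_Ici_subset_Iic_union {y z : α} (hg : ∀ q ∈ Ico y z, g q ≤ c) :
    g '' Ici y ⊆ Iic c ∪ g '' Ici z := by
  rintro _ ⟨q, hyq, rfl⟩
  by_cases hqz : q < z
  · exact .inl (hg q ⟨hyq, hqz⟩)
  · exact .inr ⟨q, not_lt.1 hqz, rfl⟩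

theorem csSup_image_Ici_le_max {y z : α} (hbdd : BddAbove (g '' Ici z))
    (hg : ∀ q ∈ Ico y z, g q ≤ c) : sSup (g '' Ici y) ≤ max c (sSup (g '' Ici z)) := by
  refine csSup_le (nonempty_Ici.image g) fun b hb => ?_
  rcases image_Ici_subset_Iic_union hg hb with hbc | hbz
  · exact le_max_of_le_left hbc
  · exact le_max_of_le_right (le_csSup hbdd hbz)

variable [TopologicalSpace α] [OrderTopology α]

theorem eventually_csSup_image_Ici_eq {p : α} (hbdd : BddAbove (g '' Ici p))
    (hc : c < sSup (g '' Ici p)) (hg : ∀ᶠ q in 𝓝 p, g q ≤ c) :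
    ∀ᶠ x in 𝓝 p, sSup (g '' Ici x) = sSup (g '' Ici p) := by
  have hIco : ∀ᶠ x in 𝓝 p, (∀ q ∈ Ico x p, g q ≤ c) ∧ ∀ q ∈ Ico p x, g q ≤ c := by
    have hs := eventually_smallSets_forall.2 hg
    exact (tendsto_id.Ico tendsto_const_nhds |>.eventually hs).and
      (tendsto_const_nhds.Ico tendsto_id |>.eventually hs)
  filter_upwards [hIco] with x ⟨hxp, hpx⟩
  have hbddx : BddAbove (g '' Ici x) :=
    (bddAbove_Iic.union hbdd).mono (image_Ici_subset_Iic_union hxp)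
  refine le_antisymm ?_ ?_
  · exact (csSup_image_Ici_le_max hbdd hxp).trans (max_le hc.le le_rfl)
  · exact (le_max_iff.1 (csSup_image_Ici_le_max hbddx hpx)).resolve_left hc.not_ge

theorem eventually_csInf_image_Iic_eq {p : α} (hbdd : BddBelow (g '' Iic p))
    (hc : sInf (g '' Iic p) < c) (hg : ∀ᶠ q in 𝓝 p, c ≤ g q) :
    ∀ᶠ x in 𝓝 p, sInf (g '' Iic x) = sInf (g '' Iic p) :=
  eventually_csSup_image_Ici_eq (α := αᵒᵈ) (β := βᵒᵈ)
    (g := OrderDual.toDual ∘ g ∘ OrderDual.ofDual) hbdd hc hg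

end

section Relaxation

variable {H F : ℝ → ℝ}

theorem bddAbove_min_image_Ici (hF : Antitone F) (x : ℝ) :
    BddAbove ((fun q => min (F q) (H q)) '' Ici x) :=
  ⟨F x, by rintro _ ⟨q, hq, rfl⟩; exact (min_le_left _ _).trans (hF hq)⟩

theorem bddBelow_max_image_Iic (hF : Antitone F) (x : ℝ) :
    BddBelow ((fun q => max (F q) (H q)) '' Iic x) :=
  ⟨F x, by rintro _ ⟨q, hq, rfl⟩; exact (hF hq).trans (le_max_left _ _)⟩

theorem min_le_subR (hF : Antitone F) (p : ℝ) : min (F p) (H p) ≤ subR H F p :=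
  le_csSup (bddAbove_min_image_Ici hF p) ⟨p, self_mem_Ici, rfl⟩

theorem supR_le_max (hF : Antitone F) (p : ℝ) : supR H F p ≤ max (F p) (H p) :=
  csInf_le (bddBelow_max_image_Iic hF p) ⟨p, self_mem_Iic, rfl⟩

theorem subR_le (hF : Antitone F) (p : ℝ) : subR H F p ≤ F p :=
  csSup_le (nonempty_Ici.image _) fun _ ⟨_, hq, hb⟩ => hb ▸ (min_le_left _ _).trans (hF hq)

theorem eventually_subR_eq (hH : Continuous H) (hFc : Continuous F) (hF : Antitone F) {p : ℝ}
    (hp : min (F p) (H p) < subR H F p) : ∀ᶠ x in 𝓝 p, subR H F x = subR H F p := by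
  obtain ⟨c, hpc, hc⟩ := exists_between hp
  exact eventually_csSup_image_Ici_eq (bddAbove_min_image_Ici hF p) hc
    (((hFc.min hH).tendsto p).eventually_le_const hpc)

theorem eventually_supR_eq (hH : Continuous H) (hFc : Continuous F) (hF : Antitone F) {p : ℝ}
    (hp : supR H F p < max (F p) (H p)) : ∀ᶠ x in 𝓝 p, supR H F x = supR H F p := by
  obtain ⟨c, hc, hpc⟩ := exists_between hp
  exact eventually_csInf_image_Iic_eq (bddBelow_max_image_Iic hF p) hc
    (((hFc.max hH).tendsto p).eventually_const_le hpc)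

end Relaxation

theorem relax_locally_constant_general (H F0 : ℝ → ℝ)
    (hH : Continuous H)
    (hF : Continuous F0) (hFa : Antitone F0)
    (p : ℝ) (hne : relax H F0 p ≠ H p) :
    ∃ ε > 0, ∀ x ∈ Ioo (p - ε) (p + ε), relax H F0 x = relax H F0 p := by
  suffices h : ∀ᶠ x in 𝓝 p, relax H F0 x = relax H F0 p by
    obtain ⟨ε, hε, hball⟩ := Metric.eventually_nhds_iff_ball.1 h
    exact ⟨ε, hε, fun x hx => hball x (Real.ball_eq_Ioo p ε ▸ hx)⟩
  by_cases hHF : H p ≤ F0 p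
  · have hrp : relax H F0 p = subR H F0 p := if_pos hHF
    have hmin : min (F0 p) (H p) = H p := min_eq_right hHF
    have hlt : H p < subR H F0 p :=
      (hmin ▸ min_le_subR hFa p).lt_of_ne (hrp ▸ hne).symm
    filter_upwards [eventually_subR_eq hH hF hFa (hmin.symm ▸ hlt),
      hH.continuousAt.eventually_lt hF.continuousAt (hlt.trans_le (subR_le hFa p))]
      with x hx hHFx
    rw [relax, if_pos hHFx.le, hx, hrp]
  · have hrp : relax H F0 p = supR H F0 p := if_neg hHF
    have hmax : max (F0 p) (H p) = H p := max_eq_right (not_le.1 hHF).le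
    have hlt : supR H F0 p < H p :=
      (hmax ▸ supR_le_max hFa p).lt_of_ne (hrp ▸ hne)
    filter_upwards [eventually_supR_eq hH hF hFa (hmax.symm ▸ hlt),
      hF.continuousAt.eventually_lt hH.continuousAt (not_le.1 hHF)] with x hx hFHx
    rw [relax, if_neg (not_le.2 hFHx), hx, hrp]

/-- Local property of `ℜF0`: where it differs from `H`, it is locally constant. -/
theorem relax_locally_constant (H F0 : ℝ → ℝ)
    (hH : Continuous H) (hHc : Coercive H)
    (hF : Continuous F0) (hFa : Antitone F0) (hFs : SemiCoercive F0)
    (p : ℝ) (hne : relax H F0 p ≠ H p) :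
    ∃ ε > 0, ∀ x ∈ Ioo (p - ε) (p + ε), relax H F0 x = relax H F0 p :=
  relax_locally_constant_general H F0 hH hF hFa p hne
end
end
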